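/- arXiv:2206.00553 — 2 statements merged into one kernel-verified Lean document; each statement's English description precedes it below -/
import Mathlib

section
/- For real numbers l ≤ 0 ≤ u and a real z with l ≤ z ≤ u, the value ẑ = max(0, z) is the unique real satisfying: there exists δ ∈ {0,1} with ẑ ≥ 0, ẑ ≤ u·δ, ẑ ≥ z, and ẑ ≤ z − l·(1 − δ). -/
/-! The binary `δ` selects a phase of the ReLU: `δ = 0` forces `ẑ = 0` and `l ≤ z ≤ 0`, while
`δ = 1` forces `ẑ = z` and `0 ≤ z ≤ u`. Given `l ≤ z ≤ u`, the bound constraints are automatic,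
and the two phases together describe exactly the graph of `max 0`. -/

def ReluBigM (l u z zhat δ : ℝ) : Prop :=
  0 ≤ zhat ∧ zhat ≤ u * δ ∧ z ≤ zhat ∧ zhat ≤ z - l * (1 - δ)

theorem reluBigM_zero_iff {l u z zhat : ℝ} :
    ReluBigM l u z zhat 0 ↔ zhat = 0 ∧ l ≤ z ∧ z ≤ 0 := by
  simp only [ReluBigM, mul_zero, sub_zero, mul_one]
  constructor
  · rintro ⟨h0, h1, h2, h3⟩
    obtain rfl : zhat = 0 := le_antisymm h1 h0
    exact ⟨rfl, by linarith, h2⟩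
  · rintro ⟨rfl, hlz, hz⟩
    exact ⟨le_rfl, le_rfl, hz, by linarith⟩

theorem reluBigM_one_iff {l u z zhat : ℝ} :
    ReluBigM l u z zhat 1 ↔ zhat = z ∧ 0 ≤ z ∧ z ≤ u := by
  simp only [ReluBigM, mul_one, sub_self, mul_zero, sub_zero]
  constructor
  · rintro ⟨h0, h1, h2, h3⟩
    obtain rfl : zhat = z := le_antisymm h3 h2
    exact ⟨rfl, h0, h1⟩
  · rintro ⟨rfl, hz, hzu⟩
    exact ⟨hz, hzu, le_rfl, le_rfl⟩

theorem relu_milp_encoding_exact_general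
    (l u z : ℝ) (hlz : l ≤ z) (hzu : z ≤ u) (zhat : ℝ) :
    (∃ δ : ℝ, (δ = 0 ∨ δ = 1) ∧ 0 ≤ zhat ∧ zhat ≤ u * δ ∧ z ≤ zhat ∧
      zhat ≤ z - l * (1 - δ))
    ↔ zhat = max 0 z := by
  change (∃ δ : ℝ, (δ = 0 ∨ δ = 1) ∧ ReluBigM l u z zhat δ) ↔ _
  simp only [or_and_right, exists_or, exists_eq_left, reluBigM_zero_iff, reluBigM_one_iff]
  rw [eq_comm (b := max 0 z), max_eq_iff]
  constructor
  · rintro (⟨rfl, -, hz⟩ | ⟨rfl, hz, -⟩)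
    exacts [Or.inl ⟨rfl, hz⟩, Or.inr ⟨rfl, hz⟩]
  · rintro (⟨rfl, hz⟩ | ⟨rfl, hz⟩)
    exacts [Or.inl ⟨rfl, hlz, hz⟩, Or.inr ⟨rfl, hz, hzu⟩]

/-- For `l ≤ 0 ≤ u` and `l ≤ z ≤ u`, the value `ẑ = max 0 z` is the unique real
satisfying the big-M MILP ReLU encoding: there exists a binary `δ` with `ẑ ≥ 0`, `ẑ ≤ u·δ`,
`ẑ ≥ z`, and `ẑ ≤ z − l·(1 − δ)`. -/
theorem relu_milp_encoding_exact
    (l u z : ℝ) (hl : l ≤ 0) (hu : 0 ≤ u) (hlz : l ≤ z) (hzu : z ≤ u) (zhat : ℝ) :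
    (∃ δ : ℝ, (δ = 0 ∨ δ = 1) ∧ 0 ≤ zhat ∧ zhat ≤ u * δ ∧ z ≤ zhat ∧
      zhat ≤ z - l * (1 - δ))
    ↔ zhat = max 0 z :=
  relu_milp_encoding_exact_general l u z hlz hzu zhat
end

section
/- If z > 0 then any feasible (ẑ, δ) of the ReLU MILP encoding has δ = 1 and ẑ = z; if z < 0 then δ = 0 and ẑ = 0. -/
/-!
The binary `δ` selects which pair of constraints pinches `ẑ`: `δ = 0` leaves `0 ≤ ẑ ≤ 0`, and
`δ = 1` leaves `z ≤ ẑ ≤ z`. When `z > 0` the first branch would give `z ≤ ẑ ≤ 0`, and when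
`z < 0` the second would give `0 ≤ ẑ ≤ z`, so the sign of `z` determines the branch.
-/

structure ReluMilpFeasible {α : Type*} [Ring α] [PartialOrder α] (l u z zhat δ : α) : Prop where
  delta_binary : δ = 0 ∨ δ = 1
  nonneg : 0 ≤ zhat
  le_upper : zhat ≤ u * δ
  input_le : z ≤ zhat
  le_lower : zhat ≤ z - l * (1 - δ)

namespace ReluMilpFeasible

variable {α : Type*} [Ring α] [PartialOrder α] {l u z zhat δ : α}

theorem le_zero_of_delta_eq_zero (h : ReluMilpFeasible l u z zhat δ) (hδ : δ = 0) :
    zhat ≤ 0 := by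
  simpa only [hδ, mul_zero] using h.le_upper

theorem le_input_of_delta_eq_one (h : ReluMilpFeasible l u z zhat δ) (hδ : δ = 1) :
    zhat ≤ z := by
  simpa only [hδ, sub_self, mul_zero, sub_zero] using h.le_lower

theorem eq_zero_of_delta_eq_zero (h : ReluMilpFeasible l u z zhat δ) (hδ : δ = 0) :
    zhat = 0 :=
  (h.le_zero_of_delta_eq_zero hδ).antisymm h.nonneg

theorem eq_input_of_delta_eq_one (h : ReluMilpFeasible l u z zhat δ) (hδ : δ = 1) :
    zhat = z :=
  (h.le_input_of_delta_eq_one hδ).antisymm h.input_le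

theorem delta_eq_one_of_pos (h : ReluMilpFeasible l u z zhat δ) (hz : 0 < z) : δ = 1 :=
  h.delta_binary.resolve_left fun hδ =>
    (hz.trans_le (h.input_le.trans (h.le_zero_of_delta_eq_zero hδ))).false

theorem delta_eq_zero_of_neg (h : ReluMilpFeasible l u z zhat δ) (hz : z < 0) : δ = 0 :=
  h.delta_binary.resolve_right fun hδ =>
    ((h.nonneg.trans (h.le_input_of_delta_eq_one hδ)).trans_lt hz).false

end ReluMilpFeasible

theorem relu_milp_feasible_point_structure_general
    (l u z zhat δ : ℝ)
    (hδ : δ = 0 ∨ δ = 1) (h1 : 0 ≤ zhat) (h2 : zhat ≤ u * δ) (h3 : z ≤ zhat)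
    (h4 : zhat ≤ z - l * (1 - δ)) :
    (0 < z → δ = 1 ∧ zhat = z) ∧ (z < 0 → δ = 0 ∧ zhat = 0) := by
  have h : ReluMilpFeasible l u z zhat δ := ⟨hδ, h1, h2, h3, h4⟩
  refine ⟨fun hz => ?_, fun hz => ?_⟩
  · have hδ1 := h.delta_eq_one_of_pos hz
    exact ⟨hδ1, h.eq_input_of_delta_eq_one hδ1⟩
  · have hδ0 := h.delta_eq_zero_of_neg hz
    exact ⟨hδ0, h.eq_zero_of_delta_eq_zero hδ0⟩

/-- In the ReLU MILP encoding with bounds `l < 0 < u`, `l ≤ z ≤ u`: if `z > 0`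
then any feasible `(ẑ, δ)` has `δ = 1` and `ẑ = z`; if `z < 0` then `δ = 0` and `ẑ = 0`. -/
theorem relu_milp_feasible_point_structure
    (l u z zhat δ : ℝ) (hl : l < 0) (hu : 0 < u) (hlz : l ≤ z) (hzu : z ≤ u)
    (hδ : δ = 0 ∨ δ = 1) (h1 : 0 ≤ zhat) (h2 : zhat ≤ u * δ) (h3 : z ≤ zhat)
    (h4 : zhat ≤ z - l * (1 - δ)) :
    (0 < z → δ = 1 ∧ zhat = z) ∧ (z < 0 → δ = 0 ∧ zhat = 0) :=
  relu_milp_feasible_point_structure_general l u z zhat δ hδ h1 h2 h3 h4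
end
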